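/- arXiv:math/0603079 — 9 statements merged into one kernel-verified Lean document; each statement's English description precedes it below -/
import Mathlib

section
/- Let D be an N × m array whose entries in column k lie in a set of size s_k, such that in every column each symbol appears the same number of times (so s_k divides N for each k). Define the weighted coincidence number δᵂ_{ij}(D) = Σ_{k=1}^m s_k · [x_{ik} = x_{jk}] for rows i ≠ j, where [P] is 1 if P holds and 0 otherwise. Then Σ_{1 ≤ i < j ≤ N} δᵂ_{ij}(D) = N·(N·m − Σ_{k=1}^m s_k)/2. -/
/-- The first weighted moment of a balanced mixed-level array:
`∑_{i<j} δᵂ_{ij}(D) = N(Nm − ∑ s_k)/2`. -/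
theorem weighted_coincidence_first_moment
    {N m : ℕ} (s : Fin m → ℕ) (hs : ∀ k, 0 < s k)
    (hdvd : ∀ k, s k ∣ N)
    (D : Fin N → (k : Fin m) → Fin (s k))
    (hbal : ∀ (k : Fin m) (a : Fin (s k)),
      (Finset.univ.filter (fun i => D i k = a)).card = N / s k) :
    ∑ p ∈ Finset.univ.filter (fun p : Fin N × Fin N => p.1 < p.2),
        (∑ k, if D p.1 k = D p.2 k then (s k : ℚ) else 0)
      = (N : ℚ) * ((N : ℚ) * m - ∑ k, (s k : ℚ)) / 2 := by
  classical
  set g : Fin N × Fin N → ℚ :=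
    fun p => ∑ k, if D p.1 k = D p.2 k then (s k : ℚ) else 0 with hg
  -- total sum over all ordered pairs
  have key : ∀ k : Fin m, ∑ i : Fin N, ∑ j : Fin N,
      (if D i k = D j k then (s k : ℚ) else 0) = (N : ℚ) * N := by
    intro k
    have hrow : ∀ i : Fin N,
        ∑ j : Fin N, (if D i k = D j k then (s k : ℚ) else 0) = (N : ℚ) := by
      intro i
      calc ∑ j : Fin N, (if D i k = D j k then (s k : ℚ) else 0)
          = ∑ j ∈ Finset.univ.filter (fun j => D j k = D i k), (s k : ℚ) := by
            rw [Finset.sum_filter]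
            exact Finset.sum_congr rfl (fun j _ => by simp [eq_comm])
        _ = ((Finset.univ.filter (fun j => D j k = D i k)).card : ℚ) * (s k : ℚ) := by
            rw [Finset.sum_const, nsmul_eq_mul]
        _ = ((N / s k : ℕ) : ℚ) * (s k : ℚ) := by rw [hbal k (D i k)]
        _ = (N : ℚ) := by
            rw [← Nat.cast_mul, Nat.div_mul_cancel (hdvd k)]
    simp [hrow, Finset.sum_const, Finset.card_univ, mul_comm]
  have htot : ∑ p : Fin N × Fin N, g p = (N : ℚ) * N * m := by
    calc ∑ p : Fin N × Fin N, g p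
        = ∑ i : Fin N, ∑ j : Fin N, ∑ k : Fin m,
            (if D i k = D j k then (s k : ℚ) else 0) := Fintype.sum_prod_type _
      _ = ∑ i : Fin N, ∑ k : Fin m, ∑ j : Fin N,
            (if D i k = D j k then (s k : ℚ) else 0) :=
          Finset.sum_congr rfl (fun i _ => Finset.sum_comm)
      _ = ∑ k : Fin m, ∑ i : Fin N, ∑ j : Fin N,
            (if D i k = D j k then (s k : ℚ) else 0) := Finset.sum_comm
      _ = ∑ k : Fin m, (N : ℚ) * N := Finset.sum_congr rfl (fun k _ => key k)
      _ = (N : ℚ) * N * m := by simp [Finset.sum_const, Finset.card_univ, mul_comm]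
  -- diagonal sum
  have hdiag : ∑ p ∈ Finset.univ.filter (fun p : Fin N × Fin N => p.1 = p.2), g p
      = (N : ℚ) * ∑ k, (s k : ℚ) := by
    have : ∑ p ∈ Finset.univ.filter (fun p : Fin N × Fin N => p.1 = p.2), g p
        = ∑ i : Fin N, g (i, i) := by
      apply Finset.sum_nbij' (fun p => p.1) (fun i => (i, i))
      · intro p hp; simp
      · intro i hi; simp
      · intro p hp
        simp only [Finset.mem_filter] at hp
        ext <;> simp [hp.2.symm]
      · intro i hi; rfl
      · intro p hp
        simp only [Finset.mem_filter] at hp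
        rw [show p = (p.1, p.2) from rfl, hp.2]
    rw [this]
    simp [g, Finset.sum_const, Finset.card_univ, mul_comm]
  -- lt sum equals gt sum
  have hLG : ∑ p ∈ Finset.univ.filter (fun p : Fin N × Fin N => p.1 < p.2), g p
      = ∑ p ∈ Finset.univ.filter (fun p : Fin N × Fin N => p.2 < p.1), g p := by
    apply Finset.sum_nbij' (fun p => p.swap) (fun p => p.swap)
    · intro p hp; simp only [Finset.mem_filter] at hp ⊢; exact ⟨Finset.mem_univ _, hp.2⟩
    · intro p hp; simp only [Finset.mem_filter] at hp ⊢; exact ⟨Finset.mem_univ _, hp.2⟩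
    · intro p _; simp
    · intro p _; simp
    · intro p _
      simp only [g, Prod.fst_swap, Prod.snd_swap]
      exact Finset.sum_congr rfl (fun k _ => by simp [eq_comm])
  -- partition of univ
  have hsplit : ∑ p : Fin N × Fin N, g p
      = ∑ p ∈ Finset.univ.filter (fun p : Fin N × Fin N => p.1 < p.2), g p
        + ∑ p ∈ Finset.univ.filter (fun p : Fin N × Fin N => p.2 < p.1), g p
        + ∑ p ∈ Finset.univ.filter (fun p : Fin N × Fin N => p.1 = p.2), g p := by
    have h1 := Finset.sum_filter_add_sum_filter_not Finset.univ
      (fun p : Fin N × Fin N => p.1 < p.2) g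
    have h2 := Finset.sum_filter_add_sum_filter_not
      (Finset.univ.filter (fun p : Fin N × Fin N => ¬ p.1 < p.2))
      (fun p : Fin N × Fin N => p.2 < p.1) g
    have e1 : (Finset.univ.filter (fun p : Fin N × Fin N => ¬ p.1 < p.2)).filter
        (fun p => p.2 < p.1)
        = Finset.univ.filter (fun p : Fin N × Fin N => p.2 < p.1) := by
      rw [Finset.filter_filter]
      apply Finset.filter_congr
      intro p _
      constructor
      · exact fun h => h.2
      · exact fun h => ⟨fun h' => absurd h (lt_asymm h'), h⟩
    have e2 : (Finset.univ.filter (fun p : Fin N × Fin N => ¬ p.1 < p.2)).filter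
        (fun p => ¬ p.2 < p.1)
        = Finset.univ.filter (fun p : Fin N × Fin N => p.1 = p.2) := by
      rw [Finset.filter_filter]
      apply Finset.filter_congr
      intro p _
      constructor
      · rintro ⟨h1', h2'⟩; exact le_antisymm (not_lt.mp h2') (not_lt.mp h1')
      · intro h; exact ⟨by omega, by omega⟩
    rw [e1, e2] at h2
    rw [← h1, ← h2]
    ring
  rw [hLG, hdiag, htot] at hsplit
  -- solve for the lt sum
  rw [hLG]
  have : (2 : ℚ) * ∑ p ∈ Finset.univ.filter (fun p : Fin N × Fin N => p.2 < p.1), g p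
      = (N : ℚ) * N * m - (N : ℚ) * ∑ k, (s k : ℚ) := by linarith
  field_simp
  linarith
end

section
/- Let t(1), ..., t(M) be nonnegative integers with mean μ = (Σ t(i))/M, and let η = μ − ⌊μ⌋ be the fractional part of μ. Then (1/M)·Σ_{i=1}^M t(i)² ≥ μ² + η(1 − η), with equality if and only if each t(i) ∈ {⌊μ⌋, ⌊μ⌋ + 1}. -/
/-- The second moment of a sequence of nonnegative integers with mean `μ` is
at least `μ² + η(1−η)` where `η` is the fractional part of `μ`, with equality
iff every term is `⌊μ⌋` or `⌊μ⌋ + 1`. -/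
theorem second_moment_integer_lower_bound
    {M : ℕ} (hM : 0 < M) (t : Fin M → ℕ)
    (μ η : ℚ) (hμ : μ = (∑ i, (t i : ℚ)) / M) (hη : η = μ - ⌊μ⌋) :
    (μ ^ 2 + η * (1 - η) ≤ (1 / M) * ∑ i, (t i : ℚ) ^ 2) ∧
    ((1 / M) * ∑ i, (t i : ℚ) ^ 2 = μ ^ 2 + η * (1 - η) ↔
      ∀ i, (t i : ℤ) = ⌊μ⌋ ∨ (t i : ℤ) = ⌊μ⌋ + 1) := by
  have hMpos : (0 : ℚ) < M := by exact_mod_cast hM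
  have hMne : (M : ℚ) ≠ 0 := ne_of_gt hMpos
  set m : ℤ := ⌊μ⌋ with hm
  have hsum : (∑ i, (t i : ℚ)) = M * μ := by
    rw [hμ]; field_simp
  have hμm : μ = (m : ℚ) + η := by rw [hη]; ring
  have expand : ∑ i, ((t i : ℚ) - m) * ((t i : ℚ) - m - 1)
      = (∑ i, (t i : ℚ) ^ 2) - (2 * m + 1) * (∑ i, (t i : ℚ))
        + M * ((m : ℚ) * (m + 1)) := by
    rw [Finset.mul_sum, ← Finset.sum_sub_distrib]
    rw [show (M : ℚ) * ((m : ℚ) * (m + 1)) = ∑ _i : Fin M, (m : ℚ) * (m + 1) by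
      rw [Finset.sum_const]; simp [mul_comm]]
    rw [← Finset.sum_add_distrib]
    exact Finset.sum_congr rfl fun i _ => by ring
  have key : (∑ i, (t i : ℚ) ^ 2) - M * (μ ^ 2 + η * (1 - η))
      = ∑ i, ((t i : ℚ) - m) * ((t i : ℚ) - m - 1) := by
    rw [expand, hsum, hμm]; ring
  have term_nonneg : ∀ i, 0 ≤ ((t i : ℚ) - m) * ((t i : ℚ) - m - 1) := by
    intro i
    have h : (0 : ℤ) ≤ ((t i : ℤ) - m) * ((t i : ℤ) - m - 1) := by
      rcases le_or_gt 1 ((t i : ℤ) - m) with h | h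
      · nlinarith
      · nlinarith
    exact_mod_cast h
  have hS : 0 ≤ ∑ i, ((t i : ℚ) - m) * ((t i : ℚ) - m - 1) :=
    Finset.sum_nonneg fun i _ => term_nonneg i
  constructor
  · rw [one_div, ← div_eq_inv_mul, le_div_iff₀ hMpos]
    nlinarith [key, hS]
  · constructor
    · intro heq
      have h1 : (∑ i, (t i : ℚ) ^ 2) = M * (μ ^ 2 + η * (1 - η)) := by
        field_simp at heq
        linarith [heq]
      have hS0 : ∑ i, ((t i : ℚ) - m) * ((t i : ℚ) - m - 1) = 0 := by
        linarith [key]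
      intro i
      have hall := (Finset.sum_eq_zero_iff_of_nonneg
        (fun i _ => term_nonneg i)).mp hS0 i (Finset.mem_univ i)
      have hz : ((t i : ℤ) - m) * ((t i : ℤ) - m - 1) = 0 := by exact_mod_cast hall
      rcases mul_eq_zero.mp hz with h | h
      · left; linarith
      · right; linarith
    · intro h
      have hz : ∀ i, ((t i : ℚ) - m) * ((t i : ℚ) - m - 1) = 0 := by
        intro i
        rcases h i with h' | h'
        · have : (t i : ℚ) = (m : ℚ) := by exact_mod_cast h'
          rw [this]; ring
        · have : (t i : ℚ) = (m : ℚ) + 1 := by exact_mod_cast h'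
          rw [this]; ring
      have hS0 : ∑ i, ((t i : ℚ) - m) * ((t i : ℚ) - m - 1) = 0 :=
        Finset.sum_eq_zero fun i _ => hz i
      have h1 : (∑ i, (t i : ℚ) ^ 2) = M * (μ ^ 2 + η * (1 - η)) := by
        linarith [key]
      rw [h1]
      field_simp
end

section
/- Let D be an N × m array over s symbols with all columns balanced. Suppose the pairwise coincidence numbers δ_{ij}(D) (i < j) are all equal to some constant c. Then c = m(N − s)/[(N − 1)s]; in particular, (N − 1)s divides m(N − s). -/
/-!
Fix a row `i`. Summing the coincidences of `i` with every other row and exchanging the order of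
summation counts, column by column, the other rows carrying the symbol `D i k`; by balance there
are `N/s - 1` of them in each column. Hence `(N - 1) c = m (N/s - 1)`, and multiplying by `s`
gives `(N - 1) s c = m (N - s)`.
-/

open Finset

section Coincidence

variable {ι κ α : Type*} [Fintype ι] [DecidableEq ι] [Fintype κ] [DecidableEq α]

theorem sum_card_coincidences_of_balanced (D : ι → κ → α) {t : ℕ}
    (hbal : ∀ k a, #{i | D i k = a} = t) (i : ι) :
    ∑ j ∈ univ.erase i, #{k | D i k = D j k} = Fintype.card κ * (t - 1) := by
  calc ∑ j ∈ univ.erase i, #{k | D i k = D j k}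
      = ∑ k, #{j ∈ univ.erase i | D i k = D j k} :=
        sum_card_bipartiteAbove_eq_sum_card_bipartiteBelow (fun j k => D i k = D j k)
    _ = ∑ _k : κ, (t - 1) := by
        refine sum_congr rfl fun k _ => ?_
        simp_rw [eq_comm (a := D i k)]
        rw [filter_erase, card_erase_of_mem (by simp), hbal]
    _ = Fintype.card κ * (t - 1) := by simp

theorem card_sub_one_mul_coincidence_eq (D : ι → κ → α) {t c : ℕ}
    (hbal : ∀ k a, #{i | D i k = a} = t)
    (hc : ∀ i j, i ≠ j → #{k | D i k = D j k} = c) (i : ι) :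
    (Fintype.card ι - 1) * c = Fintype.card κ * (t - 1) := by
  rw [← sum_card_coincidences_of_balanced D hbal i,
    sum_congr rfl fun j hj => hc i j (ne_of_mem_erase hj).symm]
  simp [card_erase_of_mem]

end Coincidence

/-- If all pairwise coincidence numbers of a balanced `s`-level array are
equal to a constant `c`, then `c = m(N−s)/((N−1)s)`; in particular
`(N−1)s` divides `m(N−s)`. -/
theorem constant_coincidence_value
    {N m s : ℕ} (hN : 2 ≤ N) (hs : 0 < s) (hdvd : s ∣ N)
    (D : Fin N → Fin m → Fin s)
    (hbal : ∀ (k : Fin m) (a : Fin s),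
      (Finset.univ.filter (fun i => D i k = a)).card = N / s)
    (c : ℕ)
    (hc : ∀ i j : Fin N, i ≠ j →
      (Finset.univ.filter (fun k => D i k = D j k)).card = c) :
    (c : ℚ) = (m : ℚ) * ((N : ℚ) - s) / (((N : ℚ) - 1) * s) ∧
    ((N - 1) * s) ∣ m * (N - s) := by
  have hrow : (N - 1) * c = m * (N / s - 1) := by
    simpa using card_sub_one_mul_coincidence_eq D hbal hc ⟨0, by omega⟩
  have hkey : (N - 1) * s * c = m * (N - s) := by
    rw [mul_right_comm, hrow, mul_assoc, Nat.sub_mul, one_mul, Nat.div_mul_cancel hdvd]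
  refine ⟨?_, ⟨c, hkey.symm⟩⟩
  have hsN : s ≤ N := Nat.le_of_dvd (by omega) hdvd
  have hkeyℚ : ((N : ℚ) - 1) * s * c = m * ((N : ℚ) - s) := by
    rw [← Nat.cast_one, ← Nat.cast_sub (by omega), ← Nat.cast_sub hsN]
    exact_mod_cast hkey
  have hden : ((N : ℚ) - 1) * s ≠ 0 :=
    mul_ne_zero (sub_ne_zero.mpr (by exact_mod_cast (by omega : N ≠ 1))) (by positivity)
  rw [eq_div_iff hden, ← hkeyℚ]
  ring
end

section
/- Let s be an odd prime power, n ≥ 2, and consider the functions f(x) = x₁² + a₁x₁ + h(x₂,...,xₙ) and g(x) = a₂x₁ + c·h(x₂,...,xₙ) on F_sⁿ, where h is a nonzero linear form in x₂,...,xₙ, c ∈ F_s is nonzero, and a₁, a₂ ∈ F_s. Then the pair (f(x), g(x)), as x ranges over F_sⁿ, takes exactly (s+1)s/2 distinct values in F_s²: s of them occurring s^{n−2} times each and s(s−1)/2 of them occurring 2s^{n−2} times each. -/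
/-!
Eliminating `h(x₂,…,xₙ) = (v - a₂x₁)/c` from `(f, g) = (u, v)` leaves the quadratic equation
`x₁² + (a₁ - a₂/c)x₁ = u - v/c` for `x₁`, and every solution `x₁` extends along a fiber of
`h`, i.e. in `s^{n-2}` ways. Completing the square, the number of solutions is the number of
square roots of `D(u, v) = u - v/c + ((a₁ - a₂/c)/2)²`, which is `1` at `D = 0`, and `2` or `0`
at the `(s-1)/2` nonzero squares and at the nonsquares. For fixed `v` the map `u ↦ D(u, v)` is
a translation, so each value of `D` is taken by exactly `s` pairs `(u, v)`.
-/

open Module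

section LinearForm

variable {K V : Type*} [Field K] [AddCommGroup V] [Module K V] [FiniteDimensional K V]

theorem Module.Dual.natCard_fiber_of_ne_zero {φ : Module.Dual K V} (hφ : φ ≠ 0) (t : K) :
    Nat.card {v : V // φ v = t} = Nat.card K ^ (finrank K V - 1) := by
  have hsurj : Function.Surjective φ :=
    LinearMap.range_eq_top.mp (Module.Dual.range_eq_top_of_ne_zero hφ)
  rw [← Module.Dual.finrank_ker_add_one_of_ne_zero hφ, Nat.add_sub_cancel,
    ← Module.natCard_eq_pow_finrank]
  exact Nat.card_congr (φ.toAddMonoidHom.fiberEquivKerOfSurjective hsurj t)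

theorem Prod.mk_add_add_mul_eq_iff {c : K} (hc : c ≠ 0) (q r t : K) (p : K × K) :
    (q + t, r + c * t) = p ↔ q - r / c = p.1 - p.2 / c ∧ t = (p.2 - r) / c := by
  obtain ⟨u, v⟩ := p
  rw [Prod.mk.injEq]
  constructor
  · rintro ⟨rfl, rfl⟩
    constructor <;> field_simp <;> ring
  · rintro ⟨h, rfl⟩
    constructor
    · field_simp at h ⊢
      linear_combination h
    · field_simp
      ring

theorem natCard_fiber_pair_add_dual [Finite K] {α : Type*} [Finite α] (q r : α → K)
    {φ : Module.Dual K V} (hφ : φ ≠ 0) {c : K} (hc : c ≠ 0) (p : K × K) :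
    Nat.card {x : α × V // (q x.1 + φ x.2, r x.1 + c * φ x.2) = p} =
      Nat.card {a // q a - r a / c = p.1 - p.2 / c} * Nat.card K ^ (finrank K V - 1) := by
  classical
  have : Fintype α := Fintype.ofFinite α
  have : Finite V := Module.finite_of_finite K
  let e : {x : α × V // (q x.1 + φ x.2, r x.1 + c * φ x.2) = p} ≃
      Σ a : {a // q a - r a / c = p.1 - p.2 / c}, {y : V // φ y = (p.2 - r a) / c} :=
    (Equiv.subtypeEquivRight fun x => Prod.mk_add_add_mul_eq_iff hc _ _ _ p).trans
      { toFun := fun x => ⟨⟨x.1.1, x.2.1⟩, ⟨x.1.2, x.2.2⟩⟩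
        invFun := fun x => ⟨(x.1.1, x.2.1), x.1.2, x.2.2⟩
        left_inv := fun _ => rfl
        right_inv := fun _ => rfl }
  rw [Nat.card_congr e, Nat.card_sigma]
  simp only [Module.Dual.natCard_fiber_of_ne_zero hφ, Finset.sum_const, Finset.card_univ,
    smul_eq_mul, Nat.card_eq_fintype_card]

end LinearForm

theorem natCard_sq_add_mul_eq {F : Type*} [Field F] (h2 : (2 : F) ≠ 0) (b e : F) :
    Nat.card {a : F // a ^ 2 + b * a = e} = Nat.card {z : F // z ^ 2 = e + (b / 2) ^ 2} :=
  Nat.card_congr <| (Equiv.addRight (b / 2)).subtypeEquiv fun a => by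
    simp only [Equiv.coe_addRight]
    constructor <;> intro h
    · rw [← h]
      field_simp
      ring
    · field_simp at h
      exact mul_left_cancel₀ (pow_ne_zero 2 h2) (by linear_combination h)

theorem natCard_subtype_add_shear {G β : Type*} [AddGroup G] (t : β → G) (P : G → Prop) :
    Nat.card {p : G × β // P (p.1 + t p.2)} = Nat.card {g // P g} * Nat.card β := by
  let shear : G × β ≃ G × β :=
    { toFun := fun p => (p.1 + t p.2, p.2)
      invFun := fun p => (p.1 - t p.2, p.2)
      left_inv := fun p => by simp
      right_inv := fun p => by simp }
  rw [← Nat.card_prod, ← Nat.card_congr Equiv.prodSubtypeFstEquivSubtypeProd]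
  exact Nat.card_congr (shear.subtypeEquiv fun _ => Iff.rfl)

noncomputable def numSqrts {M : Type*} [Monoid M] (d : M) : ℕ := Nat.card {z : M // z ^ 2 = d}

theorem sum_numSqrts {M : Type*} [Monoid M] [Fintype M] :
    ∑ d : M, numSqrts d = Fintype.card M := by
  rw [← Nat.card_eq_fintype_card, ← Nat.card_congr (Equiv.sigmaFiberEquiv fun z : M => z ^ 2),
    Nat.card_sigma]
  rfl

section FiniteField

variable {F : Type*} [Field F] [Fintype F]

theorem natCast_numSqrts [DecidableEq F] (hF : ringChar F ≠ 2) (d : F) :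
    (numSqrts d : ℤ) = quadraticChar F d + 1 := by
  rw [← quadraticChar_card_sqrts hF d, numSqrts, ← Nat.card_eq_card_toFinset]
  rfl

theorem numSqrts_eq_one_iff (hF : ringChar F ≠ 2) {d : F} : numSqrts d = 1 ↔ d = 0 := by
  classical
  rw [← quadraticChar_eq_zero_iff (F := F), ← Nat.cast_inj (R := ℤ), natCast_numSqrts hF]
  omega

theorem numSqrts_eq_zero_or_one_or_two (hF : ringChar F ≠ 2) (d : F) :
    numSqrts d = 0 ∨ numSqrts d = 1 ∨ numSqrts d = 2 := by
  classical
  have h := natCast_numSqrts hF d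
  rcases quadraticChar_isQuadratic F d with h' | h' | h' <;> omega

theorem two_mul_card_numSqrts_eq_two_add_one (hF : ringChar F ≠ 2) :
    2 * Nat.card {d : F // numSqrts d = 2} + 1 = Fintype.card F := by
  classical
  have hpt : ∀ d : F, numSqrts d =
      2 * (if numSqrts d = 2 then 1 else 0) + if d = 0 then 1 else 0 := by
    intro d
    rw [← numSqrts_eq_one_iff hF]
    rcases numSqrts_eq_zero_or_one_or_two hF d with h | h | h <;> simp [h]
  rw [← sum_numSqrts, Finset.sum_congr rfl fun d _ => hpt d, Finset.sum_add_distrib,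
    ← Finset.mul_sum, Finset.sum_boole, Finset.sum_ite_eq']
  simp [Nat.card_eq_fintype_card, Fintype.card_subtype]

theorem card_numSqrts_ne_zero (hF : ringChar F ≠ 2) :
    Nat.card {d : F // numSqrts d ≠ 0} = Nat.card {d : F // numSqrts d = 2} + 1 := by
  classical
  have hpt : ∀ d : F, (if numSqrts d ≠ 0 then 1 else 0) =
      (if numSqrts d = 2 then 1 else 0) + if d = 0 then 1 else 0 := by
    intro d
    rw [← numSqrts_eq_one_iff hF]
    rcases numSqrts_eq_zero_or_one_or_two hF d with h | h | h <;> simp [h]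
  simp only [Nat.card_eq_fintype_card, Fintype.card_subtype, Finset.card_filter,
    Finset.sum_congr rfl fun d _ => hpt d, Finset.sum_add_distrib, Finset.sum_ite_eq',
    Finset.mem_univ, if_true]

theorem natCard_fiber_sq_add_linear_pair {V : Type*} [AddCommGroup V] [Module F V]
    [FiniteDimensional F V] (hF : ringChar F ≠ 2) {φ : Module.Dual F V} (hφ : φ ≠ 0)
    {c : F} (hc : c ≠ 0) (a₁ a₂ : F) (p : F × F) :
    Nat.card {x : F × V // (x.1 ^ 2 + a₁ * x.1 + φ x.2, a₂ * x.1 + c * φ x.2) = p} =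
      numSqrts (p.1 + (((a₁ - a₂ / c) / 2) ^ 2 - p.2 / c)) *
        Fintype.card F ^ (finrank F V - 1) := by
  have hq : ∀ a : F, a ^ 2 + a₁ * a - a₂ * a / c = a ^ 2 + (a₁ - a₂ / c) * a := fun a => by
    ring
  have := natCard_fiber_pair_add_dual (fun a => a ^ 2 + a₁ * a) (fun a => a₂ * a) hφ hc p
  simp only [hq, natCard_sq_add_mul_eq (Ring.two_ne_zero hF), Nat.card_eq_fintype_card,
    add_comm_sub] at this
  exact this

end FiniteField

theorem semi_orthogonal_quadratic_linear_general
    {F : Type*} [Field F] [Fintype F] (hodd : Odd (Fintype.card F))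
    {n : ℕ}
    (h : (Fin (n - 1) → F) →ₗ[F] F) (hh : h ≠ 0)
    (c a₁ a₂ : F) (hc : c ≠ 0) :
    let s := Fintype.card F
    let f : F × (Fin (n - 1) → F) → F := fun x => x.1 ^ 2 + a₁ * x.1 + h x.2
    let g : F × (Fin (n - 1) → F) → F := fun x => a₂ * x.1 + c * h x.2
    let cnt : F × F → ℕ := fun p => Nat.card {x // (f x, g x) = p}
    (∀ p, cnt p = 0 ∨ cnt p = s ^ (n - 2) ∨ cnt p = 2 * s ^ (n - 2)) ∧
    Nat.card {p : F × F // cnt p = s ^ (n - 2)} = s ∧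
    Nat.card {p : F × F // cnt p = 2 * s ^ (n - 2)} = s * (s - 1) / 2 ∧
    Nat.card {p : F × F // cnt p ≠ 0} = (s + 1) * s / 2 := by
  intro s f g cnt
  have hF : ringChar F ≠ 2 := by
    rwa [Ne, FiniteField.even_card_iff_char_two, ← Nat.even_iff, Nat.not_even_iff_odd]
  set D : F × F → F := fun p => p.1 + (((a₁ - a₂ / c) / 2) ^ 2 - p.2 / c)
  have hcnt : ∀ p, cnt p = numSqrts (D p) * s ^ (n - 2) := fun p => by
    rw [show n - 2 = finrank F (Fin (n - 1) → F) - 1 by simp [Nat.sub_sub]]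
    exact natCard_fiber_sq_add_linear_pair hF hh hc a₁ a₂ p
  have hcount : ∀ P : ℕ → Prop,
      Nat.card {p // P (cnt p)} = Nat.card {d : F // P (numSqrts d * s ^ (n - 2))} * s := by
    intro P
    simp only [hcnt]
    exact (natCard_subtype_add_shear (fun v => ((a₁ - a₂ / c) / 2) ^ 2 - v / c)
      fun d => P (numSqrts d * s ^ (n - 2))).trans
        (congrArg _ (Nat.card_eq_fintype_card (α := F)))
  have hE : s ^ (n - 2) ≠ 0 := pow_ne_zero _ Fintype.card_ne_zero
  have hs : 2 * Nat.card {d : F // numSqrts d = 2} + 1 = s :=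
    two_mul_card_numSqrts_eq_two_add_one hF
  refine ⟨fun p => ?_, ?_, ?_, ?_⟩
  · rw [hcnt]
    rcases numSqrts_eq_zero_or_one_or_two hF (D p) with h | h | h <;> simp [h]
  · refine (hcount (· = s ^ (n - 2))).trans ?_
    simp [mul_eq_right₀ hE, numSqrts_eq_one_iff hF]
  · refine (hcount (· = 2 * s ^ (n - 2))).trans ?_
    simp only [mul_left_inj' hE]
    rw [← hs, Nat.add_sub_cancel, mul_left_comm, Nat.mul_div_cancel_left _ two_pos]
    ring
  · refine (hcount (· ≠ 0)).trans ?_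
    simp only [mul_ne_zero_iff_right hE, card_numSqrts_ne_zero hF]
    rw [← hs, show 2 * _ + 1 + 1 = 2 * (Nat.card {d : F // numSqrts d = 2} + 1) by ring,
      mul_assoc, Nat.mul_div_cancel_left _ two_pos, mul_comm]

/-- Lemma 11(ii), `s` odd: the pair `(x₁² + a₁x₁ + h, a₂x₁ + c·h)` takes
`(s+1)s/2` distinct values, `s` of them `s^{n−2}` times each and `s(s−1)/2` of
them `2s^{n−2}` times each. -/
theorem semi_orthogonal_quadratic_linear
    {F : Type*} [Field F] [Fintype F] (hodd : Odd (Fintype.card F))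
    {n : ℕ} (hn : 2 ≤ n)
    (h : (Fin (n - 1) → F) →ₗ[F] F) (hh : h ≠ 0)
    (c a₁ a₂ : F) (hc : c ≠ 0) :
    let s := Fintype.card F
    let f : F × (Fin (n - 1) → F) → F := fun x => x.1 ^ 2 + a₁ * x.1 + h x.2
    let g : F × (Fin (n - 1) → F) → F := fun x => a₂ * x.1 + c * h x.2
    let cnt : F × F → ℕ := fun p => Nat.card {x // (f x, g x) = p}
    (∀ p, cnt p = 0 ∨ cnt p = s ^ (n - 2) ∨ cnt p = 2 * s ^ (n - 2)) ∧
    Nat.card {p : F × F // cnt p = s ^ (n - 2)} = s ∧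
    Nat.card {p : F × F // cnt p = 2 * s ^ (n - 2)} = s * (s - 1) / 2 ∧
    Nat.card {p : F × F // cnt p ≠ 0} = (s + 1) * s / 2 :=
  semi_orthogonal_quadratic_linear_general hodd h hh c a₁ a₂ hc
end

section
/- Let s be a prime power, n ≥ 2, let h₁, h₂ be linearly independent nonzero linear forms in variables x₂,...,xₙ over F_s, and let a₁, a₂ ∈ F_s. Then the columns f(x) = x₁² + a₁x₁ + h₁(x₂,...,xₙ) and g(x) = a₂x₁ + h₂(x₂,...,xₙ), as x ranges over F_sⁿ, are orthogonal: every pair (u,v) ∈ F_s² occurs exactly s^{n−2} times as (f(x), g(x)). -/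
/-!
Independence of `h₁, h₂` makes `y ↦ (h₁ y, h₂ y)` surjective onto `F²`. For each fixed `x₁` the
conditions `f = u, g = v` prescribe `(h₁ y, h₂ y)`, so they cut out a coset of the kernel, of
size `s^(n-1) / s²`; summing over the `s` values of `x₁` gives `s^(n-2)`.
-/

namespace LinearMap

section Forms

variable {K V : Type*} [Field K] [AddCommGroup V] [Module K V]

theorem exists_apply_eq_zero_and_apply_ne_zero_of_forall_ne_smul {f g : V →ₗ[K] K}
    (hf : ∀ t : K, f ≠ t • g) : ∃ z, g z = 0 ∧ f z ≠ 0 := by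
  by_contra! hker
  have hle : ⨅ _ : Unit, ker g ≤ ker f := fun z hz ↦ hker z (by simpa using hz)
  have hspan := mem_span_of_iInf_ker_le_ker hle
  rw [Set.range_const, Submodule.mem_span_singleton] at hspan
  obtain ⟨t, ht⟩ := hspan
  exact hf t ht.symm

theorem prod_surjective_of_forall_ne_smul {f g : V →ₗ[K] K} (hf : ∀ t : K, f ≠ t • g)
    (hg : g ≠ 0) : Function.Surjective (f.prod g) := by
  obtain ⟨z, hgz, hfz⟩ := exists_apply_eq_zero_and_apply_ne_zero_of_forall_ne_smul hf
  rintro ⟨p, q⟩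
  obtain ⟨y, rfl⟩ := g.surjective_of_ne_zero hg q
  -- correct the first coordinate along `z`, which is invisible to `g`
  refine ⟨y + ((p - f y) / f z) • z, ?_⟩
  simp [hgz, div_mul_cancel₀ _ hfz]

end Forms

variable {R V W α : Type*} [Ring R] [AddCommGroup V] [Module R V] [AddCommGroup W] [Module R W]

noncomputable def solutionsEquivProdKer (L : V →ₗ[R] W) (hL : Function.Surjective L)
    (c : α → W) : {x : α × V // L x.2 = c x.1} ≃ α × ker L where
  toFun x := (x.1.1, ⟨x.1.2 - Function.surjInv hL (c x.1.1), by
    simp [x.2, Function.surjInv_eq hL]⟩)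
  invFun p := ⟨(p.1, p.2 + Function.surjInv hL (c p.1)), by
    simp [Function.surjInv_eq hL]⟩
  left_inv x := by simp
  right_inv p := by simp

theorem card_eq_card_mul_card_ker_of_surjective (L : V →ₗ[R] W) (hL : Function.Surjective L) :
    Nat.card V = Nat.card W * Nat.card (ker L) := by
  rw [(ker L).card_eq_card_quotient_mul_card,
    Nat.card_congr (L.quotKerEquivOfSurjective hL).toEquiv, mul_comm]

end LinearMap

theorem Nat.mul_eq_pow_pred_of_pow_eq_sq_mul {q k m : ℕ} (hq : 1 < q) (h : q ^ m = q ^ 2 * k) :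
    q * k = q ^ (m - 1) := by
  rcases m with _ | m
  · rw [pow_zero] at h
    exact absurd (Nat.eq_one_of_mul_eq_one_right h.symm) (Nat.one_lt_pow two_ne_zero hq).ne'
  · rw [pow_succ', sq, mul_assoc] at h
    exact (Nat.eq_of_mul_eq_mul_left (by omega) h).symm

theorem quadratic_linear_orthogonal_general
    {F : Type*} [Field F] [Fintype F] {n : ℕ}
    (h₁ h₂ : (Fin (n - 1) → F) →ₗ[F] F)
    (hind : ∀ t : F, h₁ ≠ t • h₂ ∧ h₂ ≠ t • h₁)
    (a₁ a₂ : F) :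
    ∀ u v : F,
      Nat.card {x : F × (Fin (n - 1) → F) //
          x.1 ^ 2 + a₁ * x.1 + h₁ x.2 = u ∧ a₂ * x.1 + h₂ x.2 = v}
        = Fintype.card F ^ (n - 2) := by
  intro u v
  set L := h₁.prod h₂
  have hL : Function.Surjective L :=
    LinearMap.prod_surjective_of_forall_ne_smul (fun t ↦ (hind t).1) (by simpa using (hind 0).2)
  let c : F → F × F := fun t ↦ (u - (t ^ 2 + a₁ * t), v - a₂ * t)
  have hsol : {x : F × (Fin (n - 1) → F) //
      x.1 ^ 2 + a₁ * x.1 + h₁ x.2 = u ∧ a₂ * x.1 + h₂ x.2 = v} ≃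
      {x : F × (Fin (n - 1) → F) // L x.2 = c x.1} :=
    Equiv.subtypeEquivRight fun x ↦ by
      simp only [L, c, LinearMap.prod_apply, Function.prod, Prod.mk.injEq]
      rw [eq_sub_iff_add_eq, eq_sub_iff_add_eq, add_comm (h₁ _), add_comm (h₂ _)]
  have hcard := LinearMap.card_eq_card_mul_card_ker_of_surjective L hL
  simp only [Nat.card_eq_fintype_card, Fintype.card_prod, Fintype.card_fun, Fintype.card_fin,
    ← sq] at hcard
  rw [Nat.card_congr (hsol.trans (L.solutionsEquivProdKer hL c)), Nat.card_prod,
    Nat.card_eq_fintype_card, Nat.mul_eq_pow_pred_of_pow_eq_sq_mul Fintype.one_lt_card hcard,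
    Nat.sub_sub]

/-- Lemma 11(i): if `h₁, h₂` are independent linear forms in `x₂,…,xₙ`, then
the columns `x₁² + a₁x₁ + h₁` and `a₂x₁ + h₂` are orthogonal. -/
theorem quadratic_linear_orthogonal
    {F : Type*} [Field F] [Fintype F] {n : ℕ} (hn : 3 ≤ n)
    (h₁ h₂ : (Fin (n - 1) → F) →ₗ[F] F)
    (hind : ∀ t : F, h₁ ≠ t • h₂ ∧ h₂ ≠ t • h₁)
    (a₁ a₂ : F) :
    ∀ u v : F,
      Nat.card {x : F × (Fin (n - 1) → F) //
          x.1 ^ 2 + a₁ * x.1 + h₁ x.2 = u ∧ a₂ * x.1 + h₂ x.2 = v}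
        = Fintype.card F ^ (n - 2) :=
  quadratic_linear_orthogonal_general h₁ h₂ hind a₁ a₂
end

section
/- Let D be an N × m matrix whose columns take values in sets of sizes s₁, ..., s_m respectively, with each column balanced. Define the weighted coincidence δᵂ_{ij}(D) = Σ_k s_k·[x_{ik} = x_{jk}], and define A₂(D) via N²·A₂(D) = Σ_{1 ≤ i < j ≤ N} [δᵂ_{ij}(D)]² − N[Nm(m−1) + N·Σ s_k − (Σ s_k)²]/2. Then A₂(D) ≥ (Σ_{k=1}^m s_k − m)(Σ_{k=1}^m s_k − m − N + 1)/[2(N − 1)]. -/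
private lemma split_sum_tri {N : ℕ} (f : Fin N × Fin N → ℚ)
    (hf : ∀ i j : Fin N, f (i, j) = f (j, i)) :
    ∑ p : Fin N × Fin N, f p =
      2 * ∑ p ∈ Finset.univ.filter (fun p : Fin N × Fin N => p.1 < p.2), f p
        + ∑ i, f (i, i) := by
  classical
  have key : ∀ p : Fin N × Fin N, f p =
      (if p.1 < p.2 then f p else 0) + (if p.1 = p.2 then f p else 0)
        + (if p.2 < p.1 then f p else 0) := by
    intro p
    rcases lt_trichotomy p.1 p.2 with h | h | h
    · simp [h, h.ne, not_lt.mpr h.le]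
    · simp [h, lt_irrefl]
    · simp [h, h.ne', not_lt.mpr h.le]
  have hswap : ∑ p ∈ Finset.univ.filter (fun p : Fin N × Fin N => p.2 < p.1), f p
      = ∑ p ∈ Finset.univ.filter (fun p : Fin N × Fin N => p.1 < p.2), f p := by
    refine Finset.sum_equiv (Equiv.prodComm (Fin N) (Fin N)) ?_ ?_
    · intro p; simp
    · intro p hp
      exact hf p.1 p.2
  have hdiag : ∑ p ∈ Finset.univ.filter (fun p : Fin N × Fin N => p.1 = p.2), f p
      = ∑ i, f (i, i) := by
    rw [Finset.sum_filter, Fintype.sum_prod_type]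
    apply Finset.sum_congr rfl
    intro i _
    simp [eq_comm]
  calc ∑ p : Fin N × Fin N, f p
      = ∑ p : Fin N × Fin N, ((if p.1 < p.2 then f p else 0)
          + (if p.1 = p.2 then f p else 0) + (if p.2 < p.1 then f p else 0)) :=
        Finset.sum_congr rfl (fun p _ => key p)
    _ = ∑ p ∈ Finset.univ.filter (fun p : Fin N × Fin N => p.1 < p.2), f p
          + ∑ p ∈ Finset.univ.filter (fun p : Fin N × Fin N => p.1 = p.2), f p
          + ∑ p ∈ Finset.univ.filter (fun p : Fin N × Fin N => p.2 < p.1), f p := by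
        rw [Finset.sum_add_distrib, Finset.sum_add_distrib,
          ← Finset.sum_filter, ← Finset.sum_filter, ← Finset.sum_filter]
    _ = _ := by rw [hswap, hdiag]; ring

/-- Theorem 10: lower bound on `A₂` for mixed-level supersaturated designs. -/
theorem mixed_level_A2_lower_bound
    {N m : ℕ} (hN : 2 ≤ N) (s : Fin m → ℕ) (hs : ∀ k, 0 < s k)
    (hdvd : ∀ k, s k ∣ N)
    (D : Fin N → (k : Fin m) → Fin (s k))
    (hbal : ∀ (k : Fin m) (a : Fin (s k)),
      (Finset.univ.filter (fun i => D i k = a)).card = N / s k)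
    (A₂ : ℚ)
    (hA₂ : A₂ = (∑ p ∈ Finset.univ.filter (fun p : Fin N × Fin N => p.1 < p.2),
          (∑ k, if D p.1 k = D p.2 k then (s k : ℚ) else 0) ^ 2) / (N : ℚ) ^ 2
        - ((N : ℚ) * m * ((m : ℚ) - 1) + (N : ℚ) * (∑ k, (s k : ℚ))
            - (∑ k, (s k : ℚ)) ^ 2) / (2 * N)) :
    ((∑ k, (s k : ℚ)) - m) * ((∑ k, (s k : ℚ)) - m - N + 1) / (2 * ((N : ℚ) - 1))
      ≤ A₂ := by
  classical
  have hNQ : (2:ℚ) ≤ (N:ℚ) := by exact_mod_cast hN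
  have hNpos : (0:ℚ) < N := by linarith
  have hN1 : (0:ℚ) < (N:ℚ) - 1 := by linarith
  set S : ℚ := ∑ k, (s k : ℚ) with hS
  set P : Finset (Fin N × Fin N) :=
    Finset.univ.filter (fun p : Fin N × Fin N => p.1 < p.2) with hP
  set δ : Fin N × Fin N → ℚ :=
    fun p => ∑ k, if D p.1 k = D p.2 k then (s k : ℚ) else 0 with hδ
  have hδsym : ∀ i j : Fin N, δ (i, j) = δ (j, i) := by
    intro i j
    simp only [hδ]
    exact Finset.sum_congr rfl (fun k _ => by simp [eq_comm])
  -- total sum over all ordered pairs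
  have htot : ∑ p : Fin N × Fin N, δ p = (m:ℚ) * (N:ℚ)^2 := by
    simp only [hδ]
    rw [Fintype.sum_prod_type]
    have hrow : ∀ i : Fin N,
        ∑ j, ∑ k, (if D i k = D j k then (s k:ℚ) else 0) = (m:ℚ) * N := by
      intro i
      rw [Finset.sum_comm]
      have hk : ∀ k : Fin m,
          ∑ j, (if D i k = D j k then (s k:ℚ) else 0) = (N:ℚ) := by
        intro k
        have h1 : ∑ j, (if D i k = D j k then (s k:ℚ) else 0)
            = ∑ j ∈ Finset.univ.filter (fun j => D j k = D i k), (s k:ℚ) := by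
          rw [Finset.sum_filter]
          exact Finset.sum_congr rfl (fun j _ => by simp [eq_comm])
        rw [h1, Finset.sum_const, hbal k (D i k), nsmul_eq_mul,
          ← Nat.cast_mul, Nat.div_mul_cancel (hdvd k)]
      rw [Finset.sum_congr rfl (fun k _ => hk k), Finset.sum_const,
        Finset.card_univ, Fintype.card_fin, nsmul_eq_mul]
    rw [Finset.sum_congr rfl (fun i _ => hrow i), Finset.sum_const,
      Finset.card_univ, Fintype.card_fin, nsmul_eq_mul]
    ring
  -- diagonal sum
  have hdiag : ∑ i : Fin N, δ (i, i) = (N:ℚ) * S := by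
    have : ∀ i : Fin N, δ (i, i) = S := by
      intro i; simp [hδ, hS]
    rw [Finset.sum_congr rfl (fun i _ => this i), Finset.sum_const,
      Finset.card_univ, Fintype.card_fin, nsmul_eq_mul]
  -- J1
  have hsplitδ := split_sum_tri δ hδsym
  rw [htot, hdiag] at hsplitδ
  have hJ1 : ∑ p ∈ P, δ p = ((m:ℚ) * (N:ℚ)^2 - N * S) / 2 := by linarith
  -- card of P
  have hsplit1 := split_sum_tri (fun _ : Fin N × Fin N => (1:ℚ)) (fun _ _ => rfl)
  simp only [Finset.sum_const, Finset.card_univ, Fintype.card_prod,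
    Fintype.card_fin, nsmul_eq_mul, mul_one, Nat.cast_mul] at hsplit1
  have hcard : (P.card : ℚ) = ((N:ℚ)^2 - N) / 2 := by
    have : (N:ℚ) * N = 2 * (P.card : ℚ) + N := by exact_mod_cast hsplit1
    nlinarith [this]
  -- Cauchy–Schwarz
  set J2 : ℚ := ∑ p ∈ P, (δ p)^2 with hJ2
  have hCS : (∑ p ∈ P, δ p)^2 ≤ (P.card : ℚ) * J2 := by
    have h := Finset.sum_mul_sq_le_sq_mul_sq P (fun _ => (1:ℚ)) δ
    simpa [Finset.sum_const, nsmul_eq_mul] using h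
  rw [hJ1, hcard] at hCS
  -- rewrite A₂ in terms of J2
  have hA₂' : A₂ = J2 / (N:ℚ)^2
      - ((N:ℚ) * m * ((m:ℚ) - 1) + (N:ℚ) * S - S^2) / (2 * N) := hA₂
  rw [hA₂']
  -- algebraic identity for the bound
  have hNne : (N:ℚ) ≠ 0 := ne_of_gt hNpos
  have hN1ne : (N:ℚ) - 1 ≠ 0 := ne_of_gt hN1
  have hb : (S - m) * (S - m - N + 1) / (2 * ((N:ℚ) - 1))
      = ((N:ℚ) * m - S)^2 / (2 * N * ((N:ℚ) - 1))
        - ((N:ℚ) * m * ((m:ℚ) - 1) + (N:ℚ) * S - S^2) / (2 * N) := by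
    field_simp
    ring
  rw [hb]
  have hmain : ((N:ℚ) * m - S)^2 / (2 * N * ((N:ℚ) - 1)) ≤ J2 / (N:ℚ)^2 := by
    rw [div_le_div_iff₀ (by positivity) (by positivity)]
    nlinarith [hCS]
  linarith
end

section
/- Let s be a prime power, n ≥ 2, and fix a subset G ⊆ F_s with |G| = k, 1 ≤ k ≤ s. Let h be a nonzero linear form in x₂,...,xₙ and a₁ ≠ a₂ elements of F_s. Restrict the domain to Ω = {x ∈ F_sⁿ : x₁ ∈ G}. Then for the functions f(x) = a₁x₁ + h(x₂,...,xₙ) and g(x) = a₂x₁ + h(x₂,...,xₙ) on Ω, the projected A₂ value A₂(f,g) = |Ω|⁻²·Σ_{u₁,u₂ ∈ F_s*} |Σ_{x ∈ Ω} χ(u₁f(x) + u₂g(x))|² equals (s − k)/k, where χ is any nontrivial additive character of F_s. -/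
/-!
Write `ψ` for `χ` viewed as an additive character. Summing first over `x₁ ∈ G` and then over the
free coordinates, the character sum of `u₁f + u₂g` factors as
`(∑_{t∈G} ψ((u₁a₁ + u₂a₂)t)) · (∑_y ψ((u₁ + u₂)h(y)))`. The second factor vanishes unless
`u₂ = -u₁`, because then `(u₁ + u₂)h` is a nonzero functional and `ψ` is nontrivial on its image,
the whole field. Only one `u₂` survives for each `u₁`, and after the substitution `u = u₁(a₁ - a₂)`
what is left is `∑_{u ≠ 0} |∑_{t∈G} ψ(ut)|²`. By orthogonality, summing over all `u` instead
gives `s·k`, and the term `u = 0` contributes `k²`.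
-/

open Finset

namespace AddChar

def ofNormEqOne {A : Type*} [AddMonoid A] (χ : A → ℂ) (hadd : ∀ x y, χ (x + y) = χ x * χ y)
    (habs : ∀ x, ‖χ x‖ = 1) : AddChar A ℂ where
  toFun := χ
  map_zero_eq_one' := by
    have hχ₀ : χ 0 ≠ 0 := norm_ne_zero_iff.mp (by rw [habs]; exact one_ne_zero)
    simpa using (mul_eq_left₀ hχ₀).mp (by simpa using (hadd 0 0).symm)
  map_add_eq_mul' := hadd

@[simp]
lemma ofNormEqOne_apply {A : Type*} [AddMonoid A] (χ : A → ℂ) (hadd : ∀ x y, χ (x + y) = χ x * χ y)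
    (habs : ∀ x, ‖χ x‖ = 1) (x : A) : ofNormEqOne χ hadd habs x = χ x := rfl

lemma sum_product_map_add {A M α β : Type*} [AddMonoid A] [CommSemiring M] (ψ : AddChar A M)
    (s : Finset α) (t : Finset β) (f : α → A) (g : β → A) :
    ∑ x ∈ s ×ˢ t, ψ (f x.1 + g x.2) = (∑ a ∈ s, ψ (f a)) * ∑ b ∈ t, ψ (g b) := by
  simp only [sum_product, sum_mul_sum, map_add_eq_mul]

lemma sum_map_linearMap_eq_zero {F V R : Type*} [Field F] [AddCommGroup V] [Module F V]
    [Fintype V] [CommRing R] [IsDomain R] {ψ : AddChar F R} (hψ : ψ ≠ 1)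
    {φ : V →ₗ[F] F} (hφ : φ ≠ 0) : ∑ v, ψ (φ v) = 0 := by
  refine sum_eq_zero_of_ne_one (ψ := ψ.compAddMonoidHom φ.toAddMonoidHom) ?_
  obtain ⟨x, hx⟩ := ne_one_iff.mp hψ
  obtain ⟨v, rfl⟩ := LinearMap.surjective_of_ne_zero hφ x
  exact ne_one_iff.mpr ⟨v, hx⟩

lemma sum_norm_sum_mul_sq {R : Type*} [CommRing R] [Fintype R] [DecidableEq R]
    {ψ : AddChar R ℂ} (hψ : ψ.IsPrimitive) (G : Finset R) :
    ∑ u, ‖∑ t ∈ G, ψ (u * t)‖ ^ 2 = (Fintype.card R * #G : ℝ) := by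
  apply Complex.ofReal_injective
  push_cast
  calc ∑ u, (‖∑ t ∈ G, ψ (u * t)‖ : ℂ) ^ 2
      = ∑ u, ∑ t ∈ G, ∑ t' ∈ G, ψ (u * (t - t')) := by
        refine sum_congr rfl fun u _ => ?_
        rw [← Complex.mul_conj', map_sum, sum_mul_sum]
        simp only [← map_neg_eq_conj, ← map_add_eq_mul, sub_eq_add_neg, mul_add, mul_neg]
    _ = ∑ t ∈ G, ∑ t' ∈ G, if t = t' then (Fintype.card R : ℂ) else 0 := by
        rw [sum_comm]
        refine sum_congr rfl fun t _ => ?_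
        rw [sum_comm]
        simp only [sum_mulShift _ hψ, sub_eq_zero, Nat.cast_ite, Nat.cast_zero]
    _ = Fintype.card R * #G := by
        simp [sum_ite_eq, mul_comm]

lemma sum_ne_zero_norm_sum_mul_sq {F : Type*} [Field F] [Fintype F] [DecidableEq F]
    {ψ : AddChar F ℂ} (hψ : ψ ≠ 1) (G : Finset F) :
    ∑ u ∈ univ.filter (· ≠ 0), ‖∑ t ∈ G, ψ (u * t)‖ ^ 2
      = (Fintype.card F - #G) * #G := by
  rw [filter_ne', sum_erase_eq_sub (mem_univ 0), sum_norm_sum_mul_sq (.of_ne_one hψ)]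
  simp only [zero_mul, map_zero_eq_one, sum_const, nsmul_one, Complex.norm_natCast]
  ring

section Branching

variable {F V : Type*} [Field F] [DecidableEq F] [AddCommGroup V] [Module F V]
  [Fintype V] {ψ : AddChar F ℂ}

lemma norm_sum_branch_sq (hψ : ψ ≠ 1) {h : V →ₗ[F] F} (hh : h ≠ 0) (G : Finset F)
    (a₁ a₂ u₁ u₂ : F) :
    ‖∑ x ∈ G ×ˢ (univ : Finset V), ψ (u₁ * (a₁ * x.1 + h x.2) + u₂ * (a₂ * x.1 + h x.2))‖ ^ 2
      = if u₂ = -u₁ then ‖∑ t ∈ G, ψ (u₁ * (a₁ - a₂) * t)‖ ^ 2 * Fintype.card V ^ 2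
        else 0 := by
  have hsplit : ∀ x : F × V, u₁ * (a₁ * x.1 + h x.2) + u₂ * (a₂ * x.1 + h x.2)
      = (u₁ * a₁ + u₂ * a₂) * x.1 + (u₁ + u₂) * h x.2 := fun x => by ring
  rw [sum_congr rfl fun x _ => congrArg ψ (hsplit x),
    sum_product_map_add ψ G univ (fun t => (u₁ * a₁ + u₂ * a₂) * t) fun y => (u₁ + u₂) * h y]
  split_ifs with hu
  · subst hu
    simp only [add_neg_cancel, zero_mul, map_zero_eq_one, sum_const, card_univ, nsmul_eq_mul,
      mul_one, norm_mul, Complex.norm_natCast, mul_pow, mul_sub, neg_mul, ← sub_eq_add_neg]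
  · have hc : (u₁ + u₂) • h ≠ 0 := smul_ne_zero (fun h0 => hu (eq_neg_of_add_eq_zero_right h0)) hh
    have hvanish := sum_map_linearMap_eq_zero hψ hc
    simp only [LinearMap.smul_apply, smul_eq_mul] at hvanish
    rw [hvanish, mul_zero, norm_zero, sq, mul_zero]

lemma sum_sum_norm_sum_branch_sq [Fintype F] (hψ : ψ ≠ 1) {h : V →ₗ[F] F} (hh : h ≠ 0)
    (G : Finset F) {a₁ a₂ : F} (ha : a₁ ≠ a₂) :
    ∑ u₁ ∈ univ.filter (· ≠ 0), ∑ u₂ ∈ univ.filter (· ≠ 0),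
        ‖∑ x ∈ G ×ˢ (univ : Finset V),
          ψ (u₁ * (a₁ * x.1 + h x.2) + u₂ * (a₂ * x.1 + h x.2))‖ ^ 2
      = (Fintype.card F - #G) * #G * Fintype.card V ^ 2 := by
  have hshift : ψ.mulShift (a₁ - a₂) ≠ 1 := IsPrimitive.of_ne_one hψ (sub_ne_zero.mpr ha)
  rw [← sum_ne_zero_norm_sum_mul_sq hshift, sum_mul]
  refine sum_congr rfl fun u₁ hu₁ => ?_
  have hneg : -u₁ ∈ univ.filter (· ≠ 0) := by simpa using (mem_filter.mp hu₁).2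
  simp only [norm_sum_branch_sq hψ hh, sum_ite_eq', hneg, if_true, mulShift_apply]
  ring_nf

end Branching

end AddChar

theorem projected_A2_branching_general
    {F : Type*} [Field F] [Fintype F] [DecidableEq F]
    {n : ℕ}
    (χ : F → ℂ) (hadd : ∀ x y, χ (x + y) = χ x * χ y)
    (habs : ∀ x, ‖χ x‖ = 1) (hnt : ∃ x, χ x ≠ 1)
    (G : Finset F) (k : ℕ) (hG : G.card = k)
    (h : (Fin (n - 1) → F) →ₗ[F] F) (hh : h ≠ 0)
    (a₁ a₂ : F) (ha : a₁ ≠ a₂) :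
    let s := (Fintype.card F : ℝ)
    let f : F × (Fin (n - 1) → F) → F := fun x => a₁ * x.1 + h x.2
    let g : F × (Fin (n - 1) → F) → F := fun x => a₂ * x.1 + h x.2
    ((k * Fintype.card F ^ (n - 1) : ℝ))⁻¹ ^ 2 *
        ∑ u₁ ∈ Finset.univ.filter (fun u : F => u ≠ 0),
          ∑ u₂ ∈ Finset.univ.filter (fun u : F => u ≠ 0),
            (‖∑ x ∈ G ×ˢ (Finset.univ : Finset (Fin (n - 1) → F)),
                χ (u₁ * f x + u₂ * g x)‖) ^ 2
      = (s - k) / k := by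
  intro s f g
  have hψ : AddChar.ofNormEqOne χ hadd habs ≠ 1 := AddChar.ne_one_iff.mpr hnt
  have hsum := AddChar.sum_sum_norm_sum_branch_sq hψ hh G ha
  simp only [AddChar.ofNormEqOne_apply, Fintype.card_fun, Fintype.card_fin, hG,
    Nat.cast_pow] at hsum
  simp only [f, g, s, hsum]
  rcases eq_or_ne (k : ℝ) 0 with hk0 | hk0
  · simp [hk0]
  · field_simp

/-- Lemma 13(ii): on the restricted domain `Ω = G × F^{n−1}` with `|G| = k`,
the columns `a₁x₁ + h` and `a₂x₁ + h` (with `a₁ ≠ a₂`, `h` a nonzero linear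
form) have projected `A₂` value `(s − k)/k`. -/
theorem projected_A2_branching
    {F : Type*} [Field F] [Fintype F] [DecidableEq F]
    {n : ℕ} (hn : 2 ≤ n)
    (χ : F → ℂ) (hadd : ∀ x y, χ (x + y) = χ x * χ y)
    (habs : ∀ x, ‖χ x‖ = 1) (hnt : ∃ x, χ x ≠ 1)
    (G : Finset F) (k : ℕ) (hk : 1 ≤ k) (hG : G.card = k)
    (h : (Fin (n - 1) → F) →ₗ[F] F) (hh : h ≠ 0)
    (a₁ a₂ : F) (ha : a₁ ≠ a₂) :
    let s := (Fintype.card F : ℝ)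
    let f : F × (Fin (n - 1) → F) → F := fun x => a₁ * x.1 + h x.2
    let g : F × (Fin (n - 1) → F) → F := fun x => a₂ * x.1 + h x.2
    ((k * Fintype.card F ^ (n - 1) : ℝ))⁻¹ ^ 2 *
        ∑ u₁ ∈ Finset.univ.filter (fun u : F => u ≠ 0),
          ∑ u₂ ∈ Finset.univ.filter (fun u : F => u ≠ 0),
            (‖∑ x ∈ G ×ˢ (Finset.univ : Finset (Fin (n - 1) → F)),
                χ (u₁ * f x + u₂ * g x)‖) ^ 2
      = (s - k) / k :=
  projected_A2_branching_general χ hadd habs hnt G k hG h hh a₁ a₂ ha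
end

section
/- Let s be a prime power, n ≥ 2, let h₁ and h₂ be linearly independent nonzero linear forms in x₂,...,xₙ (so n ≥ 3), and let a₁, a₂ ∈ F_s, and G ⊆ F_s with |G| = k ≥ 1. On the restricted domain Ω = {x ∈ F_sⁿ : x₁ ∈ G}, the two columns f(x) = a₁x₁ + h₁(x₂,...,xₙ) and g(x) = a₂x₁ + h₂(x₂,...,xₙ) are orthogonal: every pair (u,v) ∈ F_s² occurs exactly k·s^{n−3} times as (f(x), g(x)) for x ∈ Ω. -/
/-!
The pair `(h₁, h₂)` is a linear map `L : F^{n-1} → F²`, surjective because `h₁, h₂` are linearly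
independent (a functional on `F²` killing its image would give a dependence between them).
Fixing `x₁ ∈ G`, the points `(x₁, y)` with `(f, g) = (u, v)` are the solutions of
`L y = (u - a₁x₁, v - a₂x₁)`, a coset of `ker L`, which has `s^{(n-1)-2}` elements.
-/

open Module

namespace LinearMap

theorem pi_surjective_of_linearIndependent {K V ι : Type*} [Field K] [AddCommGroup V]
    [Module K V] [Fintype ι] {f : ι → V →ₗ[K] K} (hf : LinearIndependent K f) :
    Function.Surjective (LinearMap.pi f) := by
  classical
  refine dualMap_injective_iff.mp <| (injective_iff_map_eq_zero _).mpr fun φ hφ => ?_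
  have hcoeff : ∀ i, φ (Pi.single i 1) = 0 := by
    refine Fintype.linearIndependent_iff.mp hf (fun i => φ (Pi.single i 1)) ?_
    ext x
    calc (∑ i, φ (Pi.single i 1) • f i) x = φ (∑ i, f i x • Pi.single i 1) := by
          simp [mul_comm]
      _ = φ (LinearMap.pi f x) := by
          congr
          ext j
          simp [Pi.single_apply]
      _ = 0 := LinearMap.congr_fun hφ x
  ext i
  exact hcoeff i

theorem natCard_ker_of_surjective {K V W : Type*} [Field K] [Fintype K] [AddCommGroup V]
    [Module K V] [FiniteDimensional K V] [AddCommGroup W] [Module K W] {L : V →ₗ[K] W}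
    (hL : Function.Surjective L) :
    Nat.card (ker L) = Fintype.card K ^ (finrank K V - finrank K W) := by
  have hrank := finrank_range_add_finrank_ker L
  rw [range_eq_top.mpr hL, finrank_top] at hrank
  have : Finite V := Module.finite_of_finite K
  have := Fintype.ofFinite (ker L)
  rw [Nat.card_eq_fintype_card, card_eq_pow_finrank (K := K), ← hrank, Nat.add_sub_cancel_left]

theorem natCard_prod_fiber_of_surjective {α R V W : Type*} [Semiring R] [AddCommGroup V]
    [Module R V] [AddCommGroup W] [Module R W] {L : V →ₗ[R] W} (hL : Function.Surjective L)
    (G : Set α) (c : α → W) :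
    Nat.card {p : α × V // p.1 ∈ G ∧ L p.2 = c p.1} = Nat.card G * Nat.card (ker L) := by
  let toSigma : {p : α × V // p.1 ∈ G ∧ L p.2 = c p.1} ≃ Σ a : G, L ⁻¹' {c a} :=
    { toFun p := ⟨⟨p.1.1, p.2.1⟩, ⟨p.1.2, p.2.2⟩⟩
      invFun s := ⟨(s.1, s.2), s.1.2, s.2.2⟩
      left_inv _ := rfl
      right_inv _ := rfl }
  rw [← Nat.card_prod]
  exact Nat.card_congr <| toSigma.trans <|
    (Equiv.sigmaCongrRight fun a : G => L.toAddMonoidHom.fiberEquivKerOfSurjective hL (c a)).trans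
      (Equiv.sigmaEquivProd G (ker L))

end LinearMap

theorem branching_columns_orthogonal_general
    {F : Type*} [Field F] [Fintype F] {n : ℕ}
    (G : Set F) (k : ℕ) (hG : Nat.card G = k)
    (h₁ h₂ : (Fin (n - 1) → F) →ₗ[F] F)
    (hind : ∀ t : F, h₁ ≠ t • h₂ ∧ h₂ ≠ t • h₁)
    (a₁ a₂ : F) :
    ∀ u v : F,
      Nat.card {x : F × (Fin (n - 1) → F) //
          x.1 ∈ G ∧ a₁ * x.1 + h₁ x.2 = u ∧ a₂ * x.1 + h₂ x.2 = v}
        = k * Fintype.card F ^ (n - 3) := by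
  intro u v
  have hli : LinearIndependent F ![h₁, h₂] :=
    (LinearIndependent.pair_iff' (by simpa using (hind 0).1)).mpr fun t => ((hind t).2).symm
  have hL := LinearMap.pi_surjective_of_linearIndependent hli
  calc _ = Nat.card {x : F × (Fin (n - 1) → F) //
          x.1 ∈ G ∧ LinearMap.pi ![h₁, h₂] x.2 = ![u - a₁ * x.1, v - a₂ * x.1]} := by
        refine Nat.card_congr (Equiv.subtypeEquivRight fun x => ?_)
        simp [funext_iff, Fin.forall_fin_two, eq_sub_iff_add_eq']
    _ = k * Fintype.card F ^ (n - 3) := by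
        rw [LinearMap.natCard_prod_fiber_of_surjective hL G fun a => ![u - a₁ * a, v - a₂ * a],
          LinearMap.natCard_ker_of_surjective hL, hG, finrank_fin_fun, finrank_fin_fun,
          Nat.sub_sub]

/-- Lemma 13(i): on the restricted domain `Ω = G × F^{n−1}`, the columns
`a₁x₁ + h₁` and `a₂x₁ + h₂` with `h₁, h₂` independent linear forms are
orthogonal: every value pair occurs exactly `k·s^{n−3}` times. -/
theorem branching_columns_orthogonal
    {F : Type*} [Field F] [Fintype F] {n : ℕ} (hn : 3 ≤ n)
    (G : Set F) (k : ℕ) (hk : 1 ≤ k) (hG : Nat.card G = k)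
    (h₁ h₂ : (Fin (n - 1) → F) →ₗ[F] F)
    (hind : ∀ t : F, h₁ ≠ t • h₂ ∧ h₂ ≠ t • h₁)
    (a₁ a₂ : F) :
    ∀ u v : F,
      Nat.card {x : F × (Fin (n - 1) → F) //
          x.1 ∈ G ∧ a₁ * x.1 + h₁ x.2 = u ∧ a₂ * x.1 + h₂ x.2 = v}
        = k * Fintype.card F ^ (n - 3) :=
  branching_columns_orthogonal_general G k hG h₁ h₂ hind a₁ a₂
end

section
/- Let N, m, s be positive integers with s | N, N ≥ 2, and suppose D is an N × m array over s symbols with every column balanced. Define A₂(D) = [(N−1)s²K₂(D) + m²s² − Nm(m+s−1)]/(2N), where K₂(D) = [N(N−1)/2]⁻¹ Σ_{i<j} δ_{ij}(D)². Then A₂(D) ≥ m(s−1)(ms − m − N + 1)/[2(N−1)] + (N−1)s²η(1−η)/(2N), where η is the fractional part of m(N−s)/[(N−1)s]; moreover equality holds if and only if the coincidence numbers δ_{ij}(D) (i < j) differ by at most one. -/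
/-!
Write `P` for the set of pairs `i < j`. Balance of the columns fixes the mean of the `δ_p`
over `P` to be `μ = m(N - s)/((N - 1)s)`. For integers, `(x - a)(x - a - 1) ≥ 0` with equality
iff `x ∈ {a, a + 1}`; summing over `P` with `a = ⌊μ⌋` gives `K₂ = μ² + η(1 - η) + G/|P|`, where
`G ≥ 0` is the sum of these products. As `A₂` is an increasing affine function of `K₂`, this is
the bound, with equality iff every `δ_p` lies in `{⌊μ⌋, ⌊μ⌋ + 1}`, which, the mean being `μ`,
happens iff they differ by at most one.
-/

open Finset

theorem Finset.sum_sum_eq_two_nsmul_sum_lt_add_sum_diag {ι M : Type*} [LinearOrder ι]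
    [Fintype ι] [AddCommMonoid M] (f : ι → ι → M) (hf : ∀ i j, f i j = f j i) :
    ∑ i, ∑ j, f i j = 2 • ∑ p ∈ univ.filter (fun p : ι × ι => p.1 < p.2), f p.1 p.2
      + ∑ i, f i i := by
  have hsplit : ∀ p : ι × ι, f p.1 p.2 = (if p.1 < p.2 then f p.1 p.2 else 0)
      + (if p.2 < p.1 then f p.2 p.1 else 0) + (if p.1 = p.2 then f p.1 p.2 else 0) := by
    rintro ⟨i, j⟩
    rcases lt_trichotomy i j with h | rfl | h
    · simp [h, h.not_gt, h.ne]
    · simp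
    · simp [h, h.not_gt, h.ne', hf i j]
  have hswap : ∑ p : ι × ι, (if p.2 < p.1 then f p.2 p.1 else 0)
      = ∑ p : ι × ι, (if p.1 < p.2 then f p.1 p.2 else 0) :=
    Fintype.sum_equiv (Equiv.prodComm ι ι) _ _ fun _ => rfl
  rw [← Fintype.sum_prod_type', Fintype.sum_congr _ _ hsplit, sum_add_distrib,
    sum_add_distrib, hswap, ← two_nsmul, ← sum_filter]
  simp [Fintype.sum_prod_type]

theorem cast_card_filter_fst_lt_snd (ι K : Type*) [LinearOrder ι] [Fintype ι] [Field K]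
    [CharZero K] :
    (#(univ.filter fun p : ι × ι => p.1 < p.2) : K)
      = Fintype.card ι * (Fintype.card ι - 1) / 2 := by
  have h := sum_sum_eq_two_nsmul_sum_lt_add_sum_diag (fun (_ _ : ι) => 1) fun _ _ => rfl
  simp only [sum_const, card_univ, smul_eq_mul, mul_one] at h
  have hK : (Fintype.card ι * Fintype.card ι : K)
      = 2 * #(univ.filter fun p : ι × ι => p.1 < p.2) + Fintype.card ι := by
    exact_mod_cast h
  rw [eq_div_iff two_ne_zero]
  linear_combination -hK

section Balanced

variable {ι κ α : Type*} [Fintype ι] [Fintype κ] [DecidableEq α]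

theorem sum_sum_card_agree_of_balanced (D : ι → κ → α) (c : ℕ)
    (hbal : ∀ k a, #{i | D i k = a} = c) :
    ∑ i, ∑ j, #{k | D i k = D j k} = Fintype.card κ * (Fintype.card ι * c) := by
  have hcol : ∀ k i, #{j | D i k = D j k} = c := fun k i => by
    simpa only [eq_comm] using hbal k (D i k)
  calc ∑ i, ∑ j, #{k | D i k = D j k} = ∑ k, ∑ i, #{j | D i k = D j k} := by
        simp only [card_filter]
        conv_rhs => rw [sum_comm]
        exact sum_congr rfl fun _ _ => sum_comm
    _ = Fintype.card κ * (Fintype.card ι * c) := by simp [hcol]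

theorem sum_card_agree_filter_lt_of_balanced [LinearOrder ι] (K : Type*) [Field K] [CharZero K]
    (D : ι → κ → α) (c : ℕ) (hbal : ∀ k a, #{i | D i k = a} = c) :
    ∑ p ∈ univ.filter (fun p : ι × ι => p.1 < p.2), (#{k | D p.1 k = D p.2 k} : K)
      = Fintype.card κ * Fintype.card ι * (c - 1) / 2 := by
  have h := sum_sum_card_agree_of_balanced D c hbal
  rw [sum_sum_eq_two_nsmul_sum_lt_add_sum_diag _ fun i j => by simp only [eq_comm]] at h
  simp only [filter_true, card_univ, sum_const, smul_eq_mul] at h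
  rw [eq_div_iff two_ne_zero]
  have hK : 2 * ∑ p ∈ univ.filter (fun p : ι × ι => p.1 < p.2), (#{k | D p.1 k = D p.2 k} : K)
      + Fintype.card ι * Fintype.card κ = Fintype.card κ * (Fintype.card ι * c) := by
    exact_mod_cast h
  linear_combination hK

end Balanced

theorem Int.mul_sub_one_nonneg (w : ℤ) : 0 ≤ w * (w - 1) := by
  nlinarith [Int.le_self_sq w]

theorem Int.sub_mul_sub_sub_one_eq_zero_iff {a x : ℤ} :
    (x - a) * (x - a - 1) = 0 ↔ a ≤ x ∧ x ≤ a + 1 := by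
  rw [mul_eq_zero]
  omega

section Floor

variable {ι K : Type*} [CommRing K] [LinearOrder K] [FloorRing K]

theorem Finset.sum_intCast_sq_eq_of_sum_eq (P : Finset ι) (x : ι → ℤ) {μ : K}
    (hmean : ∑ p ∈ P, (x p : K) = #P * μ) :
    ∑ p ∈ P, (x p : K) ^ 2 = #P * (μ ^ 2 + Int.fract μ * (1 - Int.fract μ))
      + ((∑ p ∈ P, (x p - ⌊μ⌋) * (x p - ⌊μ⌋ - 1) : ℤ) : K) := by
  have hsq : ∀ p, (x p : K) ^ 2 = (2 * ⌊μ⌋ + 1) * (x p : K) - ⌊μ⌋ * (⌊μ⌋ + 1)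
      + ((x p - ⌊μ⌋) * (x p - ⌊μ⌋ - 1) : ℤ) := fun p => by push_cast; ring
  rw [sum_congr rfl fun p _ => hsq p, sum_add_distrib, sum_sub_distrib, ← mul_sum, hmean,
    sum_const, nsmul_eq_mul, Int.cast_sum, ← Int.self_sub_floor]
  ring

theorem Finset.sum_sub_floor_mul_sub_floor_sub_one_eq_zero_iff [IsStrictOrderedRing K]
    (P : Finset ι) (x : ι → ℤ) {μ : K} (hmean : ∑ p ∈ P, (x p : K) = #P * μ) :
    ∑ p ∈ P, (x p - ⌊μ⌋) * (x p - ⌊μ⌋ - 1) = 0 ↔ ∀ p ∈ P, ∀ q ∈ P, x p ≤ x q + 1 := by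
  rw [sum_eq_zero_iff_of_nonneg fun p _ => Int.mul_sub_one_nonneg _]
  simp only [Int.sub_mul_sub_sub_one_eq_zero_iff]
  refine ⟨fun h p hp q hq => by linarith [h p hp, h q hq], fun h p hp => ⟨?_, ?_⟩⟩
  · -- the `p`-th term of the sum is strictly below `x p + 1`, so the mean is too
    rw [Int.floor_le_iff]
    have hlt : #P * μ < #P * ((x p : K) + 1) := by
      rw [← hmean, ← nsmul_eq_mul, ← sum_const]
      exact sum_lt_sum (fun q hq => by exact_mod_cast h q hq p hp) ⟨p, hp, by linarith⟩
    exact_mod_cast lt_of_mul_lt_mul_left hlt (Nat.cast_nonneg _)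
  · rw [← sub_le_iff_le_add, Int.le_floor]
    have hle : #P * ((x p : K) - 1) ≤ #P * μ := by
      rw [← hmean, ← nsmul_eq_mul, ← sum_const]
      exact sum_le_sum fun q hq => by
        rw [sub_le_iff_le_add]; exact_mod_cast h p hp q hq
    push_cast
    exact le_of_mul_le_mul_left hle (by exact_mod_cast card_pos.2 ⟨p, hp⟩)

end Floor

theorem forall₂_lt_iff_forall₂_ne_of_symm {α β : Type*} [LinearOrder α] {f : α → α → β}
    (hf : ∀ i j, f i j = f j i) {r : β → β → Prop} :
    (∀ i j, i < j → ∀ i' j', i' < j' → r (f i j) (f i' j'))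
      ↔ ∀ i j i' j', i ≠ j → i' ≠ j' → r (f i j) (f i' j') := by
  have key {t : β → Prop} : (∀ i j, i < j → t (f i j)) ↔ ∀ i j, i ≠ j → t (f i j) :=
    ⟨fun h i j hij => hij.lt_or_gt.elim (h i j) fun hji => hf i j ▸ h j i hji,
      fun h i j hij => h i j hij.ne⟩
  refine (forall₂_congr fun i j => imp_congr_right fun _ => key (t := r (f i j))).trans
    ((key (t := fun v => ∀ i' j', i' ≠ j' → r v (f i' j'))).trans ?_)
  exact ⟨fun h i j i' j' hij => h i j hij i' j', fun h i j hij i' j' => h i j i' j' hij⟩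

theorem A2_lower_bound_multi_level_general
    {N m s : ℕ} (hN : 2 ≤ N) (hs : 0 < s) (hdvd : s ∣ N)
    (D : Fin N → Fin m → Fin s)
    (hbal : ∀ (k : Fin m) (a : Fin s),
      (Finset.univ.filter (fun i => D i k = a)).card = N / s)
    (δ : Fin N → Fin N → ℕ)
    (hδ : ∀ i j, δ i j = (Finset.univ.filter (fun k => D i k = D j k)).card)
    (K₂ A₂ μ η : ℚ)
    (hK₂ : K₂ = (∑ p ∈ Finset.univ.filter (fun p : Fin N × Fin N => p.1 < p.2),
        (δ p.1 p.2 : ℚ) ^ 2) / ((N : ℚ) * ((N : ℚ) - 1) / 2))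
    (hA₂ : A₂ = (((N : ℚ) - 1) * s ^ 2 * K₂ + (m : ℚ) ^ 2 * s ^ 2
        - (N : ℚ) * m * ((m : ℚ) + s - 1)) / (2 * N))
    (hμ : μ = (m : ℚ) * ((N : ℚ) - s) / (((N : ℚ) - 1) * s))
    (hη : η = μ - ⌊μ⌋) :
    ((m : ℚ) * ((s : ℚ) - 1) * ((m : ℚ) * s - m - N + 1) / (2 * ((N : ℚ) - 1))
        + ((N : ℚ) - 1) * s ^ 2 * η * (1 - η) / (2 * N) ≤ A₂) ∧
    (A₂ = (m : ℚ) * ((s : ℚ) - 1) * ((m : ℚ) * s - m - N + 1) / (2 * ((N : ℚ) - 1))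
        + ((N : ℚ) - 1) * s ^ 2 * η * (1 - η) / (2 * N) ↔
      ∀ i j i' j' : Fin N, i ≠ j → i' ≠ j' → δ i j ≤ δ i' j' + 1) := by
  set P := univ.filter fun p : Fin N × Fin N => p.1 < p.2
  set x : Fin N × Fin N → ℤ := fun p => δ p.1 p.2
  have hNQ : (2 : ℚ) ≤ N := by exact_mod_cast hN
  have hN₁ : (N : ℚ) - 1 ≠ 0 := by linarith
  have hsQ : (s : ℚ) ≠ 0 := by positivity
  have hcardP : (#P : ℚ) = N * (N - 1) / 2 := by
    simpa using cast_card_filter_fst_lt_snd (Fin N) ℚ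
  have hmean : ∑ p ∈ P, (x p : ℚ) = #P * μ := by
    simp only [x, Int.cast_natCast, hδ]
    rw [sum_card_agree_filter_lt_of_balanced ℚ D _ hbal, hcardP, hμ, Nat.cast_div hdvd hsQ]
    simp only [Fintype.card_fin]
    field_simp
  have hsq := P.sum_intCast_sq_eq_of_sum_eq x hmean
  set G := ∑ p ∈ P, (x p - ⌊μ⌋) * (x p - ⌊μ⌋ - 1)
  have hkey : A₂ = (m : ℚ) * ((s : ℚ) - 1) * ((m : ℚ) * s - m - N + 1) / (2 * ((N : ℚ) - 1))
        + ((N : ℚ) - 1) * s ^ 2 * η * (1 - η) / (2 * N)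
        + (N - 1) * s ^ 2 / (2 * N) * (G / #P) := by
    have hδx : ∑ p ∈ P, (δ p.1 p.2 : ℚ) ^ 2 = ∑ p ∈ P, (x p : ℚ) ^ 2 := by simp [x]
    rw [hA₂, hK₂, hδx, hsq, ← Int.self_sub_floor, ← hη, hcardP, hμ]
    field_simp
    ring
  have hcoef : 0 < ((N : ℚ) - 1) * s ^ 2 / (2 * N) :=
    div_pos (mul_pos (by linarith) (by positivity)) (by positivity)
  have hP : (0 : ℚ) < #P := by rw [hcardP]; nlinarith
  refine ⟨?_, ?_⟩
  · have hG : 0 ≤ G := sum_nonneg fun p _ => Int.mul_sub_one_nonneg _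
    rw [hkey]
    exact le_add_of_nonneg_right (mul_nonneg hcoef.le (div_nonneg (by exact_mod_cast hG) hP.le))
  · rw [hkey, add_eq_left, mul_eq_zero, or_iff_right hcoef.ne', div_eq_zero_iff,
      or_iff_left hP.ne', Int.cast_eq_zero,
      sum_sub_floor_mul_sub_floor_sub_one_eq_zero_iff P x hmean]
    simp only [P, x, mem_filter, mem_univ, true_and, Prod.forall]
    norm_cast
    exact forall₂_lt_iff_forall₂_ne_of_symm (r := fun a b => a ≤ b + 1) fun i j => by
      simp only [hδ, eq_comm]

/-- Theorem 1: the lower bound for `A₂` of a balanced `s`-level supersaturated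
design, with equality iff the pairwise coincidence numbers differ by at most
one. -/
theorem A2_lower_bound_multi_level
    {N m s : ℕ} (hN : 2 ≤ N) (hs : 0 < s) (hm : 0 < m) (hdvd : s ∣ N)
    (D : Fin N → Fin m → Fin s)
    (hbal : ∀ (k : Fin m) (a : Fin s),
      (Finset.univ.filter (fun i => D i k = a)).card = N / s)
    (δ : Fin N → Fin N → ℕ)
    (hδ : ∀ i j, δ i j = (Finset.univ.filter (fun k => D i k = D j k)).card)
    (K₂ A₂ μ η : ℚ)
    (hK₂ : K₂ = (∑ p ∈ Finset.univ.filter (fun p : Fin N × Fin N => p.1 < p.2),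
        (δ p.1 p.2 : ℚ) ^ 2) / ((N : ℚ) * ((N : ℚ) - 1) / 2))
    (hA₂ : A₂ = (((N : ℚ) - 1) * s ^ 2 * K₂ + (m : ℚ) ^ 2 * s ^ 2
        - (N : ℚ) * m * ((m : ℚ) + s - 1)) / (2 * N))
    (hμ : μ = (m : ℚ) * ((N : ℚ) - s) / (((N : ℚ) - 1) * s))
    (hη : η = μ - ⌊μ⌋) :
    ((m : ℚ) * ((s : ℚ) - 1) * ((m : ℚ) * s - m - N + 1) / (2 * ((N : ℚ) - 1))
        + ((N : ℚ) - 1) * s ^ 2 * η * (1 - η) / (2 * N) ≤ A₂) ∧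
    (A₂ = (m : ℚ) * ((s : ℚ) - 1) * ((m : ℚ) * s - m - N + 1) / (2 * ((N : ℚ) - 1))
        + ((N : ℚ) - 1) * s ^ 2 * η * (1 - η) / (2 * N) ↔
      ∀ i j i' j' : Fin N, i ≠ j → i' ≠ j' → δ i j ≤ δ i' j' + 1) :=
  A2_lower_bound_multi_level_general hN hs hdvd D hbal δ hδ K₂ A₂ μ η hK₂ hA₂ hμ hη
end
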